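/- arXiv:1501.07402 — 6 statements merged into one kernel-verified Lean document; each statement's English description precedes it below -/
import Mathlib

section
/- Let M be a nonnegative left substochastic n×n matrix with ρ(M) < 1 and L the diagonal 0-1 matrix of an index subset N₀ ⊆ {1,...,n}. Then entrywise (I − LML)^{-1} L ≤ L (I − M)^{-1} L. -/
/-!
Since every eigenvalue of `M` lies in the open unit disc, Gelfand's formula gives `M ^ k → 0`,
and then `(LML) ^ k → 0` because `0 ≤ LML ≤ M` entrywise. Hence both inverses are limits of
Neumann series. As `L` is an idempotent commuting with `LML`, each term satisfies
`(LML) ^ k L = L (LML) ^ k L ≤ L M ^ k L`, and the inequality passes to the limit.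
-/

open Matrix Finset Filter Topology

theorem tendsto_pow_atTop_nhds_zero_of_spectrum_norm_lt_one {A : Type*} [NormedRing A]
    [NormedAlgebra ℂ A] [CompleteSpace A] (a : A) (ha : ∀ z ∈ spectrum ℂ a, ‖z‖ < 1) :
    Tendsto (a ^ ·) atTop (𝓝 0) := by
  rcases subsingleton_or_nontrivial A with hA | hA
  · exact tendsto_const_nhds.congr fun _ => Subsingleton.elim _ _
  have hrad : spectralRadius ℂ a < 1 := by
    simpa using spectrum.spectralRadius_lt_of_forall_lt a (r := 1) fun z hz => by
      simpa [← NNReal.coe_lt_coe] using ha z hz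
  obtain ⟨r, hr, hr1⟩ := ENNReal.lt_iff_exists_nnreal_btwn.mp hrad
  have hbound : ∀ᶠ k : ℕ in atTop, ‖a ^ k‖ ≤ (r : ℝ) ^ k := by
    have hgelfand := spectrum.pow_nnnorm_pow_one_div_tendsto_nhds_spectralRadius a
    filter_upwards [hgelfand.eventually_lt_const hr, eventually_gt_atTop 0] with k hk hk0
    rw [one_div, ENNReal.rpow_inv_lt_iff (by positivity), ENNReal.rpow_natCast,
      ← ENNReal.coe_pow, ENNReal.coe_lt_coe] at hk
    exact_mod_cast hk.le
  exact squeeze_zero_norm' hbound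
    (tendsto_pow_atTop_nhds_zero_of_lt_one r.coe_nonneg (by exact_mod_cast hr1))

namespace Matrix

section Entrywise

variable {l m n α : Type*} [Fintype m] [Semiring α] [PartialOrder α] [IsOrderedRing α]

theorem mul_apply_nonneg {A : Matrix l m α} {B : Matrix m n α} (hA : ∀ i j, 0 ≤ A i j)
    (hB : ∀ i j, 0 ≤ B i j) (i : l) (j : n) : 0 ≤ (A * B) i j :=
  Finset.sum_nonneg fun k _ => mul_nonneg (hA i k) (hB k j)

theorem mul_apply_le_mul_apply {A A' : Matrix l m α} {B B' : Matrix m n α}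
    (hA : ∀ i j, 0 ≤ A i j) (hB : ∀ i j, 0 ≤ B i j) (hAA' : ∀ i j, A i j ≤ A' i j)
    (hBB' : ∀ i j, B i j ≤ B' i j) (i : l) (j : n) : (A * B) i j ≤ (A' * B') i j :=
  Finset.sum_le_sum fun k _ =>
    mul_le_mul (hAA' i k) (hBB' k j) (hB k j) ((hA i k).trans (hAA' i k))

variable [DecidableEq m]

theorem pow_apply_le_pow_apply {A B : Matrix m m α} (hA : ∀ i j, 0 ≤ A i j)
    (hAB : ∀ i j, A i j ≤ B i j) (k : ℕ) (i j : m) : (A ^ k) i j ≤ (B ^ k) i j := by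
  induction k generalizing i j with
  | zero => exact le_rfl
  | succ k ih =>
    rw [pow_succ, pow_succ]
    exact mul_apply_le_mul_apply (pow_apply_nonneg hA k) hA ih hAB i j

theorem mul_mul_apply_le_of_le_one {L M : Matrix m m α} (hL : ∀ i j, 0 ≤ L i j)
    (hL1 : ∀ i j, L i j ≤ (1 : Matrix m m α) i j) (hM : ∀ i j, 0 ≤ M i j) (i j : m) :
    (L * M * L) i j ≤ M i j := by
  simpa using mul_apply_le_mul_apply (mul_apply_nonneg hL hM) hL
    (mul_apply_le_mul_apply hL hM hL1 fun _ _ => le_rfl) hL1 i j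

theorem pow_mul_apply_le_of_idempotent {L M : Matrix m m α} (hL : ∀ i j, 0 ≤ L i j)
    (hL1 : ∀ i j, L i j ≤ (1 : Matrix m m α) i j) (hLL : L * L = L) (hM : ∀ i j, 0 ≤ M i j)
    (k : ℕ) (i j : m) : ((L * M * L) ^ k * L) i j ≤ (L * M ^ k * L) i j := by
  have hB : ∀ i j, 0 ≤ (L * M * L) i j := mul_apply_nonneg (mul_apply_nonneg hL hM) hL
  have hcomm : Commute L (L * M * L) := by
    simp only [Commute, SemiconjBy, Matrix.mul_assoc, hLL]
    rw [← Matrix.mul_assoc, hLL]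
  calc ((L * M * L) ^ k * L) i j = (L * (L * M * L) ^ k * L) i j := by
        rw [(hcomm.pow_right k).eq, Matrix.mul_assoc _ L L, hLL]
    _ ≤ (L * M ^ k * L) i j :=
        mul_apply_le_mul_apply (mul_apply_nonneg hL (pow_apply_nonneg hB k)) hL
          (mul_apply_le_mul_apply hL (pow_apply_nonneg hB k) (fun _ _ => le_rfl)
            (pow_apply_le_pow_apply hB (mul_mul_apply_le_of_le_one hL hL1 hM) k))
          (fun _ _ => le_rfl) i j

end Entrywise

variable {n : Type*} [Fintype n] [DecidableEq n]

theorem tendsto_pow_nhds_zero_of_spectrum_map_ofReal_norm_lt_one (M : Matrix n n ℝ)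
    (hM : ∀ μ ∈ spectrum ℂ (M.map Complex.ofReal), ‖μ‖ < 1) :
    Tendsto (M ^ ·) atTop (𝓝 0) := by
  let _ : NormedRing (Matrix n n ℂ) := Matrix.linftyOpNormedRing
  let _ : NormedAlgebra ℂ (Matrix n n ℂ) := Matrix.linftyOpNormedAlgebra
  have hC : Tendsto (fun k => (M ^ k).map Complex.ofReal) atTop (𝓝 0) := by
    convert tendsto_pow_atTop_nhds_zero_of_spectrum_norm_lt_one _ hM using 2 with k
    · exact map_pow Complex.ofRealHom.mapMatrix M k
    · -- the ℓ∞ operator norm induces the product topology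
      rfl
  simpa [Function.comp_def, Matrix.map_map] using
    ((continuous_id.matrix_map Complex.continuous_re).tendsto 0).comp hC

theorem tendsto_pow_nhds_zero_of_apply_le {A B : Matrix n n ℝ} (hA : ∀ i j, 0 ≤ A i j)
    (hAB : ∀ i j, A i j ≤ B i j) (hB : Tendsto (B ^ ·) atTop (𝓝 0)) :
    Tendsto (A ^ ·) atTop (𝓝 0) := by
  refine tendsto_pi_nhds.mpr fun i => tendsto_pi_nhds.mpr fun j => ?_
  exact tendsto_of_tendsto_of_tendsto_of_le_of_le tendsto_const_nhds
    (tendsto_pi_nhds.mp (tendsto_pi_nhds.mp hB i) j) (fun k => pow_apply_nonneg hA k i j)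
    (fun k => pow_apply_le_pow_apply hA hAB k i j)

section Neumann

variable {R : Type*} [Field R] [TopologicalSpace R] [IsTopologicalRing R] [T2Space R]
  {X : Matrix n n R}

theorem isUnit_det_one_sub_of_tendsto_pow (hX : Tendsto (X ^ ·) atTop (𝓝 0)) :
    IsUnit (1 - X).det := by
  have hdet : Tendsto (fun k => (1 - X ^ k).det) atTop (𝓝 1) := by
    simpa [Function.comp_def] using (continuous_id.matrix_det.tendsto _).comp
      ((tendsto_const_nhds (x := (1 : Matrix n n R))).sub hX)
  refine isUnit_iff_ne_zero.mpr fun h => ?_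
  simp only [← geom_sum_mul_neg, det_mul, h, mul_zero] at hdet
  exact zero_ne_one (tendsto_const_nhds_iff.mp hdet)

theorem tendsto_sum_range_pow_nhds_inv_one_sub (hX : Tendsto (X ^ ·) atTop (𝓝 0)) :
    Tendsto (fun k => ∑ m ∈ range k, X ^ m) atTop (𝓝 (1 - X)⁻¹) := by
  have hsum : ∀ k, ∑ m ∈ range k, X ^ m = (1 - X ^ k) * (1 - X)⁻¹ := fun k => by
    rw [← geom_sum_mul_neg, Matrix.mul_assoc,
      mul_nonsing_inv _ (isUnit_det_one_sub_of_tendsto_pow hX), Matrix.mul_one]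
  simpa [hsum] using
    ((tendsto_const_nhds (x := (1 : Matrix n n R))).sub hX).mul_const (1 - X)⁻¹

end Neumann

end Matrix

theorem inv_indicator_entrywise_le_general {n : ℕ}
    (M : Matrix (Fin n) (Fin n) ℝ)
    (hnn : ∀ i j, 0 ≤ M i j)
    (hspec : ∀ μ ∈ spectrum ℂ (M.map (Complex.ofReal)), ‖μ‖ < 1)
    (N0 : Finset (Fin n)) :
    let L : Matrix (Fin n) (Fin n) ℝ :=
      Matrix.diagonal fun i => if i ∈ N0 then 1 else 0
    ∀ i j, ((1 - L * M * L)⁻¹ * L) i j ≤ (L * (1 - M)⁻¹ * L) i j := by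
  intro L i j
  have hL : ∀ a b, 0 ≤ L a b := fun a b => by
    simp only [L, diagonal_apply]; split_ifs <;> norm_num
  have hL1 : ∀ a b, L a b ≤ (1 : Matrix (Fin n) (Fin n) ℝ) a b := fun a b => by
    simp only [L, diagonal_apply, one_apply]; split_ifs <;> norm_num
  have hLL : L * L = L := by simp [L, diagonal_mul_diagonal]
  have hMpow := M.tendsto_pow_nhds_zero_of_spectrum_map_ofReal_norm_lt_one hspec
  have hBpow := tendsto_pow_nhds_zero_of_apply_le (mul_apply_nonneg (mul_apply_nonneg hL hnn) hL)
    (mul_mul_apply_le_of_le_one hL hL1 hnn) hMpow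
  have hlhs := (tendsto_sum_range_pow_nhds_inv_one_sub hBpow).mul_const L
  have hrhs := ((tendsto_sum_range_pow_nhds_inv_one_sub hMpow).const_mul L).mul_const L
  refine le_of_tendsto_of_tendsto' (tendsto_pi_nhds.mp (tendsto_pi_nhds.mp hlhs i) j)
    (tendsto_pi_nhds.mp (tendsto_pi_nhds.mp hrhs i) j) fun k => ?_
  simp only [Finset.sum_mul, Finset.mul_sum, Matrix.sum_apply]
  exact Finset.sum_le_sum fun m _ => pow_mul_apply_le_of_idempotent hL hL1 hLL hnn m i j

/-- For a nonnegative left substochastic matrix `M` with spectral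
radius `< 1` and `L` the 0-1 diagonal matrix of an index set `N₀`, one has
`(I - LML)⁻¹ L ≤ L (I - M)⁻¹ L` entrywise. -/
theorem inv_indicator_entrywise_le {n : ℕ}
    (M : Matrix (Fin n) (Fin n) ℝ)
    (hnn : ∀ i j, 0 ≤ M i j)
    (hsub : ∀ j, ∑ i, M i j ≤ 1)
    (hspec : ∀ μ ∈ spectrum ℂ (M.map (Complex.ofReal)), ‖μ‖ < 1)
    (N0 : Finset (Fin n)) :
    let L : Matrix (Fin n) (Fin n) ℝ :=
      Matrix.diagonal fun i => if i ∈ N0 then 1 else 0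
    ∀ i j, ((1 - L * M * L)⁻¹ * L) i j ≤ (L * (1 - M)⁻¹ * L) i j :=
  inv_indicator_entrywise_le_general M hnn hspec N0
end

section
/- Let ||·|| be a norm on ℝ^n, C ⊆ ℝ^n nonempty, convex and compact, and Φ : C → C non-expansive with respect to the norm. Then the set of fixed points of Φ in C is nonempty, closed, and either a singleton or uncountable. -/
/-!
A norm on `ℝⁿ` is convex, hence continuous, and the argument works for any continuous seminorm `p`
vanishing only at `0` on a real topological vector space.

The displacement `z ↦ p (Φ z - z)` is continuous on `C`, so it attains its minimum on `C`.
That minimum is `0`: for `x₀ ∈ C` and `0 < s ≤ 1` the contraction `T = (1 - s) • Φ + s • x₀`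
has a point of zero displacement (at a minimiser `z` of its displacement, `T z` does `1 - s`
times better), and `Φ z - T z = s • (Φ z - x₀)` is small with `s`.

If `x ≠ y` are fixed, `d = p (y - x)` and `t ∈ [0, 1]`, the points of `C` within `t * d` of `x`
and within `(1 - t) * d` of `y` form a convex compact `Φ`-invariant set containing
`x + t • (y - x)`; a fixed point in it lies at distance exactly `t * d` from `x` by the triangle
inequality. So `z ↦ p (z - x)` maps the fixed-point set onto `[0, d]`.
-/

open Set Filter Topology

section SeminormNonexpansive

variable {E : Type*} [AddCommGroup E] [Module ℝ E] [TopologicalSpace E] [ContinuousSub E]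
  {p : Seminorm ℝ E} {C : Set E} {Φ : E → E}

theorem continuousOn_seminorm_displacement (hp : Continuous p)
    (hΦ : ∀ x ∈ C, ∀ y ∈ C, p (Φ x - Φ y) ≤ p (x - y)) :
    ContinuousOn (fun z ↦ p (Φ z - z)) C := by
  intro w hw
  have hlim : Tendsto (fun z ↦ 2 * p (z - w)) (𝓝[C] w) (𝓝 0) := by
    have := ((hp.comp (continuous_id.sub (continuous_const (y := w)))).tendsto w).const_mul 2
    simpa using this.mono_left nhdsWithin_le_nhds
  refine tendsto_iff_dist_tendsto_zero.2 <| squeeze_zero' (.of_forall fun _ ↦ dist_nonneg) ?_ hlim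
  filter_upwards [self_mem_nhdsWithin] with z hz
  calc dist (p (Φ z - z)) (p (Φ w - w)) ≤ p ((Φ z - Φ w) - (z - w)) := by
        rw [Real.dist_eq, sub_sub_sub_comm]; exact abs_sub_map_le_sub p _ _
    _ ≤ p (Φ z - Φ w) + p (z - w) := map_sub_le_add p _ _
    _ ≤ 2 * p (z - w) := by linarith [hΦ z hz w hw]

theorem exists_seminorm_displacement_eq_zero_of_contracting
    (hp : Continuous p) (hC : IsCompact C) (hne : C.Nonempty) {T : E → E}
    (hT : MapsTo T C C) {k : ℝ} (hk : k < 1)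
    (hTk : ∀ x ∈ C, ∀ y ∈ C, p (T x - T y) ≤ k * p (x - y)) :
    ∃ x ∈ C, p (T x - x) = 0 := by
  have hT1 : ∀ x ∈ C, ∀ y ∈ C, p (T x - T y) ≤ p (x - y) := fun x hx y hy ↦
    (hTk x hx y hy).trans <| by nlinarith [apply_nonneg p (x - y)]
  obtain ⟨x, hx, hmin⟩ := hC.exists_isMinOn hne (continuousOn_seminorm_displacement hp hT1)
  refine ⟨x, hx, le_antisymm ?_ (apply_nonneg p _)⟩
  have : p (T x - x) ≤ k * p (T x - x) :=
    (hmin (hT hx)).trans (hTk _ (hT hx) _ hx)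
  nlinarith [apply_nonneg p (T x - x)]

theorem exists_seminorm_displacement_le (hp : Continuous p) (hCconv : Convex ℝ C)
    (hC : IsCompact C) (hne : C.Nonempty) (hmaps : MapsTo Φ C C)
    (hΦ : ∀ x ∈ C, ∀ y ∈ C, p (Φ x - Φ y) ≤ p (x - y)) {ε : ℝ} (hε : 0 < ε) :
    ∃ x ∈ C, p (Φ x - x) ≤ ε := by
  obtain ⟨x₀, hx₀⟩ := hne
  obtain ⟨D, hD⟩ := hC.bddAbove_image
    (hp.comp (continuous_id.sub (continuous_const (y := x₀)))).continuousOn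
  have hD : ∀ z ∈ C, p (z - x₀) ≤ D := fun z hz ↦ hD ⟨z, hz, rfl⟩
  have hD0 : 0 ≤ D := (apply_nonneg p _).trans (hD x₀ hx₀)
  set s := ε / (ε + D)
  have hs0 : 0 < s := by positivity
  have hs1 : s ≤ 1 := (div_le_one (by positivity)).2 (by linarith)
  have hsD : s * D ≤ ε := by
    rw [div_mul_eq_mul_div, div_le_iff₀ (by positivity)]; nlinarith
  set T : E → E := fun z ↦ (1 - s) • Φ z + s • x₀
  have hT : MapsTo T C C := fun z hz ↦ hCconv (hmaps hz) hx₀ (by linarith) hs0.le (by ring)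
  have hTk : ∀ x ∈ C, ∀ y ∈ C, p (T x - T y) ≤ (1 - s) * p (x - y) := by
    intro x hx y hy
    have : T x - T y = (1 - s) • (Φ x - Φ y) := by simp only [T]; module
    rw [this, map_smul_eq_mul, Real.norm_of_nonneg (by linarith)]
    exact mul_le_mul_of_nonneg_left (hΦ x hx y hy) (by linarith)
  obtain ⟨z, hz, hTz⟩ := exists_seminorm_displacement_eq_zero_of_contracting hp hC ⟨x₀, hx₀⟩
    hT (by linarith) hTk
  refine ⟨z, hz, ?_⟩
  calc p (Φ z - z) ≤ p (Φ z - T z) + p (T z - z) := le_map_sub_add_map_sub p _ _ _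
    _ = s * p (Φ z - x₀) := by
        rw [hTz, add_zero, show Φ z - T z = s • (Φ z - x₀) by simp only [T]; module,
          map_smul_eq_mul, Real.norm_of_nonneg hs0.le]
    _ ≤ ε := (mul_le_mul_of_nonneg_left (hD _ (hmaps hz)) hs0.le).trans hsD

theorem exists_seminorm_displacement_eq_zero (hp : Continuous p) (hCconv : Convex ℝ C)
    (hC : IsCompact C) (hne : C.Nonempty) (hmaps : MapsTo Φ C C)
    (hΦ : ∀ x ∈ C, ∀ y ∈ C, p (Φ x - Φ y) ≤ p (x - y)) :
    ∃ x ∈ C, p (Φ x - x) = 0 := by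
  obtain ⟨x, hx, hmin⟩ := hC.exists_isMinOn hne (continuousOn_seminorm_displacement hp hΦ)
  refine ⟨x, hx, le_antisymm (le_of_forall_pos_le_add fun ε hε ↦ ?_) (apply_nonneg p _)⟩
  obtain ⟨y, hy, hyε⟩ := exists_seminorm_displacement_le hp hCconv hC hne hmaps hΦ hε
  rw [zero_add]
  exact (hmin hy).trans hyε

theorem exists_fixedPoint_of_seminorm_nonexpansive (hp0 : ∀ x, p x = 0 → x = 0)
    (hp : Continuous p) (hCconv : Convex ℝ C) (hC : IsCompact C) (hne : C.Nonempty)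
    (hmaps : MapsTo Φ C C) (hΦ : ∀ x ∈ C, ∀ y ∈ C, p (Φ x - Φ y) ≤ p (x - y)) :
    ∃ x ∈ C, Φ x = x := by
  obtain ⟨x, hx, h0⟩ := exists_seminorm_displacement_eq_zero hp hCconv hC hne hmaps hΦ
  exact ⟨x, hx, sub_eq_zero.1 (hp0 _ h0)⟩

theorem isClosed_fixedPoints_of_seminorm_nonexpansive (hp0 : ∀ x, p x = 0 → x = 0)
    (hp : Continuous p) (hC : IsClosed C)
    (hΦ : ∀ x ∈ C, ∀ y ∈ C, p (Φ x - Φ y) ≤ p (x - y)) :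
    IsClosed {x ∈ C | Φ x = x} := by
  have : {x ∈ C | Φ x = x} = C ∩ (fun z ↦ p (Φ z - z)) ⁻¹' {0} := by
    ext z
    simp only [mem_sep_iff, mem_inter_iff, mem_preimage, mem_singleton_iff]
    exact and_congr_right fun _ ↦ ⟨fun h ↦ by simp [h], fun h ↦ sub_eq_zero.1 (hp0 _ h)⟩
  rw [this]
  exact (continuousOn_seminorm_displacement hp hΦ).preimage_isClosed_of_isClosed hC
    isClosed_singleton

theorem exists_fixedPoint_seminorm_sub_eq_mul (hp0 : ∀ x, p x = 0 → x = 0)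
    (hp : Continuous p) (hCconv : Convex ℝ C) (hC : IsCompact C) (hmaps : MapsTo Φ C C)
    (hΦ : ∀ x ∈ C, ∀ y ∈ C, p (Φ x - Φ y) ≤ p (x - y)) {x y : E} (hx : x ∈ C) (hxΦ : Φ x = x)
    (hy : y ∈ C) (hyΦ : Φ y = y) {t : ℝ} (ht : t ∈ Icc 0 1) :
    ∃ z ∈ C, Φ z = z ∧ p (z - x) = t * p (y - x) := by
  set d := p (y - x)
  set K := C ∩ p.closedBall x (t * d) ∩ p.closedBall y ((1 - t) * d)
  have hKC : K ⊆ C := fun z hz ↦ hz.1.1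
  have hclosedBall (a : E) (r : ℝ) : IsClosed (p.closedBall a r) :=
    isClosed_le (hp.comp (continuous_id.sub continuous_const)) continuous_const
  have hKcomp : IsCompact K := (hC.inter_right (hclosedBall _ _)).inter_right (hclosedBall _ _)
  have hKconv : Convex ℝ K :=
    (hCconv.inter (p.convex_closedBall _ _)).inter (p.convex_closedBall _ _)
  have hKne : x + t • (y - x) ∈ K := by
    refine ⟨⟨hCconv.add_smul_sub_mem hx hy ht, ?_⟩, ?_⟩ <;> rw [p.mem_closedBall]
    · rw [add_sub_cancel_left, map_smul_eq_mul, Real.norm_of_nonneg ht.1]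
    · rw [show x + t • (y - x) - y = (1 - t) • (x - y) by module, map_smul_eq_mul,
        Real.norm_of_nonneg (sub_nonneg.2 ht.2), map_sub_rev]
  have hKmaps : MapsTo Φ K K := by
    refine fun z ⟨⟨hz, hzx⟩, hzy⟩ ↦ ⟨⟨hmaps hz, ?_⟩, ?_⟩ <;> rw [p.mem_closedBall] at *
    · exact hxΦ ▸ (hΦ z hz x hx).trans hzx
    · exact hyΦ ▸ (hΦ z hz y hy).trans hzy
  obtain ⟨z, hzK, hzΦ⟩ := exists_fixedPoint_of_seminorm_nonexpansive hp0 hp hKconv hKcomp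
    ⟨_, hKne⟩ hKmaps fun a ha b hb ↦ hΦ a (hKC ha) b (hKC hb)
  obtain ⟨⟨hz, hzx⟩, hzy⟩ := hzK
  rw [p.mem_closedBall] at hzx hzy
  refine ⟨z, hz, hzΦ, le_antisymm hzx ?_⟩
  have : d ≤ p (y - z) + p (z - x) := le_map_sub_add_map_sub p y z x
  rw [map_sub_rev] at this
  linarith

theorem not_countable_fixedPoints_of_seminorm_nonexpansive (hp0 : ∀ x, p x = 0 → x = 0)
    (hp : Continuous p) (hCconv : Convex ℝ C) (hC : IsCompact C) (hmaps : MapsTo Φ C C)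
    (hΦ : ∀ x ∈ C, ∀ y ∈ C, p (Φ x - Φ y) ≤ p (x - y)) {x y : E} (hx : x ∈ C) (hxΦ : Φ x = x)
    (hy : y ∈ C) (hyΦ : Φ y = y) (hxy : x ≠ y) :
    ¬ {z ∈ C | Φ z = z}.Countable := by
  intro hcount
  have hd : 0 < p (y - x) :=
    (apply_nonneg p _).lt_of_ne' fun h ↦ hxy (sub_eq_zero.1 (hp0 _ h)).symm
  have hIcc : Icc 0 (p (y - x)) ⊆ (fun z ↦ p (z - x)) '' {z ∈ C | Φ z = z} := by
    rintro r ⟨hr0, hrd⟩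
    obtain ⟨z, hz, hzΦ, hzr⟩ := exists_fixedPoint_seminorm_sub_eq_mul hp0 hp hCconv hC hmaps hΦ
      hx hxΦ hy hyΦ (t := r / p (y - x)) ⟨div_nonneg hr0 hd.le, div_le_one_of_le₀ hrd hd.le⟩
    exact ⟨z, ⟨hz, hzΦ⟩, by simp only [hzr, div_mul_cancel₀ _ hd.ne']⟩
  exact (Cardinal.Real.Icc_countable_iff.1 ((hcount.image _).mono hIcc)).not_gt hd

end SeminormNonexpansive

/-- For a (not necessarily strictly convex) norm `Nm` on ℝⁿ, a
nonempty convex compact set `C` and a map `Φ` of `C` into itself which is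
non-expansive with respect to `Nm`, the set of fixed points of `Φ` in `C` is
nonempty, closed, and either a singleton or uncountable. -/
theorem nonexpansive_fixed_point_set {n : ℕ}
    (Nm : (Fin n → ℝ) → ℝ)
    (hN0 : ∀ x, Nm x = 0 ↔ x = 0)
    (hNadd : ∀ x y, Nm (x + y) ≤ Nm x + Nm y)
    (hNsmul : ∀ (c : ℝ) (x : Fin n → ℝ), Nm (c • x) = |c| * Nm x)
    (C : Set (Fin n → ℝ))
    (hCne : C.Nonempty) (hCconv : Convex ℝ C) (hCcomp : IsCompact C)
    (Φ : (Fin n → ℝ) → (Fin n → ℝ)) (hmaps : Set.MapsTo Φ C C)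
    (hnonexp : ∀ x ∈ C, ∀ y ∈ C, Nm (Φ x - Φ y) ≤ Nm (x - y)) :
    let S : Set (Fin n → ℝ) := {x ∈ C | Φ x = x}
    S.Nonempty ∧ IsClosed S ∧ ((∃ x, S = {x}) ∨ ¬ S.Countable) := by
  intro S
  let p : Seminorm ℝ (Fin n → ℝ) := .of Nm hNadd fun c x ↦ by rw [hNsmul, Real.norm_eq_abs]
  have hp : Continuous p := p.convexOn.locallyLipschitz.continuous
  have hp0 : ∀ x, p x = 0 → x = 0 := fun x ↦ (hN0 x).1
  obtain ⟨x, hx, hxΦ⟩ :=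
    exists_fixedPoint_of_seminorm_nonexpansive hp0 hp hCconv hCcomp hCne hmaps hnonexp
  refine ⟨⟨x, hx, hxΦ⟩,
    isClosed_fixedPoints_of_seminorm_nonexpansive hp0 hp hCcomp.isClosed hnonexp, ?_⟩
  by_cases hS : S.Subsingleton
  · exact .inl ⟨x, hS.eq_singleton_of_mem ⟨hx, hxΦ⟩⟩
  · obtain ⟨y, ⟨hy, hyΦ⟩, z, ⟨hz, hzΦ⟩, hyz⟩ := Set.not_subsingleton_iff.1 hS
    exact .inr <| not_countable_fixedPoints_of_seminorm_nonexpansive hp0 hp hCconv hCcomp hmaps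
      hnonexp hy hyΦ hz hzΦ hyz
end

section
/- The map Φ(r,s) = (min{d, a + M^d r + M^s s}, (a + M^d r + M^s s − d)^+) maps the interval [R_min, R_max] into itself, where R_min = (min{d,a}, (a−d)^+) and R_max = (d, (I − M^s)^{-1}(a + M^d d − d)^+). -/
/-!
`Φ` is monotone because `M^d` and `M^s` are nonnegative, it maps every `R ≥ 0` above `R_min`,
and it maps `R_max` below itself because `z = (I - M^s)⁻¹ b` solves `z = M^s z + b` with `z ≥ 0`.

The nonnegativity of `(I - M)⁻¹` rests on: if `x ≤ M x` then `x⁺ ≤ M x⁺`. Summing and using that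
the column sums are at most `1` forces `x⁺ = M x⁺`, full columns on the support `J` of `x⁺`, and no
mass flowing out of `J`; so the columns in `J` sum to `1` over `J`, and the Elsinger property
leaves only `J = ∅`.
-/

open Matrix Finset

/-- A left substochastic matrix: nonnegative entries, column sums at most 1. -/
def Substoch {n : ℕ} (M : Matrix (Fin n) (Fin n) ℝ) : Prop :=
  (∀ i j, 0 ≤ M i j) ∧ ∀ j, ∑ i, M i j ≤ 1

/-- The Elsinger Property: no nonempty subset `J` of indices with all column
sums over `J` (for columns in `J`) equal to 1. -/
def Elsinger {n : ℕ} (M : Matrix (Fin n) (Fin n) ℝ) : Prop :=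
  ∀ J : Finset (Fin n), J.Nonempty → ¬ (∀ j ∈ J, ∑ i ∈ J, M i j = 1)

/-- The liquidation value map `Φ(r,s) = (min{d, a+M^d r+M^s s}, (a+M^d r+M^s s−d)⁺)`. -/
noncomputable def Phi {n : ℕ} (a d : Fin n → ℝ) (Md Ms : Matrix (Fin n) (Fin n) ℝ)
    (R : (Fin n → ℝ) × (Fin n → ℝ)) : (Fin n → ℝ) × (Fin n → ℝ) :=
  (fun i => min (d i) (a i + Md.mulVec R.1 i + Ms.mulVec R.2 i),
   fun i => max (a i + Md.mulVec R.1 i + Ms.mulVec R.2 i - d i) 0)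

/-- The lower bound `R_min = (min{d,a}, (a−d)⁺)`. -/
noncomputable def Rmin {n : ℕ} (a d : Fin n → ℝ) : (Fin n → ℝ) × (Fin n → ℝ) :=
  (fun i => min (d i) (a i), fun i => max (a i - d i) 0)

/-- The upper bound `R_max = (d, (I−M^s)⁻¹ (a + M^d d − d)⁺)`. -/
noncomputable def Rmax {n : ℕ} (a d : Fin n → ℝ)
    (Md Ms : Matrix (Fin n) (Fin n) ℝ) : (Fin n → ℝ) × (Fin n → ℝ) :=
  (d, (1 - Ms)⁻¹.mulVec fun i => max (a i + Md.mulVec d i - d i) 0)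

namespace Matrix

section OrderedSemiring

variable {m n R : Type*} [Fintype n] [Semiring R] [PartialOrder R] [IsOrderedRing R]
  {M : Matrix m n R}

theorem mulVec_nonneg_of_nonneg (hM : ∀ i j, 0 ≤ M i j) {v : n → R} (hv : 0 ≤ v) :
    0 ≤ M *ᵥ v :=
  fun i => sum_nonneg fun j _ => mul_nonneg (hM i j) (hv j)

theorem mulVec_mono_of_nonneg (hM : ∀ i j, 0 ≤ M i j) {v w : n → R} (h : v ≤ w) :
    M *ᵥ v ≤ M *ᵥ w :=
  fun i => sum_le_sum fun j _ => mul_le_mul_of_nonneg_left (h j) (hM i j)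

end OrderedSemiring

theorem sum_mulVec_apply {m n R : Type*} [Fintype m] [Fintype n] [NonUnitalNonAssocSemiring R]
    (M : Matrix m n R) (v : n → R) :
    ∑ i, (M *ᵥ v) i = ∑ j, (∑ i, M i j) * v j := by
  simp only [mulVec, dotProduct, sum_mul]
  exact sum_comm

theorem inv_one_sub_mulVec_eq {n R : Type*} [Fintype n] [DecidableEq n] [CommRing R]
    {M : Matrix n n R} (h : IsUnit (1 - M).det) (b : n → R) :
    (1 - M)⁻¹ *ᵥ b = M *ᵥ ((1 - M)⁻¹ *ᵥ b) + b := by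
  have hb : (1 - M) *ᵥ ((1 - M)⁻¹ *ᵥ b) = b := by
    rw [mulVec_mulVec, mul_nonsing_inv _ h, one_mulVec]
  rw [sub_mulVec, one_mulVec] at hb
  nth_rw 3 [← hb]
  abel

end Matrix

namespace Substoch

variable {n : ℕ} {M : Matrix (Fin n) (Fin n) ℝ}

theorem eq_zero_of_le_mulVec (hM : Substoch M) (hE : Elsinger M) {y : Fin n → ℝ}
    (hy0 : 0 ≤ y) (hy : y ≤ M *ᵥ y) : y = 0 := by
  classical
  have hcol : ∀ j, (∑ i, M i j) * y j ≤ y j := fun j => mul_le_of_le_one_left (hy0 j) (hM.2 j)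
  have hsum : ∑ i, (M *ᵥ y) i = ∑ i, y i :=
    le_antisymm ((M.sum_mulVec_apply y).trans_le (sum_le_sum fun j _ => hcol j))
      (sum_le_sum fun i _ => hy i)
  have hfix : ∀ i, y i = (M *ᵥ y) i := fun i =>
    (sum_eq_sum_iff_of_le fun i _ => hy i).1 hsum.symm i (mem_univ i)
  have hfull : ∀ j, 0 < y j → ∑ i, M i j = 1 := fun j hj => by
    have h := (sum_eq_sum_iff_of_le fun j _ => hcol j).1
      ((M.sum_mulVec_apply y).symm.trans hsum) j (mem_univ j)
    exact (mul_eq_right₀ hj.ne').1 h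
  have hclosed : ∀ i j, 0 < y j → ¬ 0 < y i → M i j = 0 := fun i j hj hi => by
    have hyi : ∑ j, M i j * y j = 0 :=
      (hfix i).symm.trans (le_antisymm (not_lt.1 hi) (hy0 i))
    have h := (sum_eq_zero_iff_of_nonneg fun j _ => mul_nonneg (hM.1 i j) (hy0 j)).1 hyi j
      (mem_univ j)
    exact (mul_eq_zero.1 h).resolve_right hj.ne'
  by_contra hne
  obtain ⟨k, hk⟩ : ∃ k, 0 < y k := by
    by_contra! h
    exact hne (le_antisymm h hy0)
  refine hE (univ.filter fun j => 0 < y j) ⟨k, by simpa using hk⟩ fun j hj => ?_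
  have hj : 0 < y j := (mem_filter.1 hj).2
  rw [← hfull j hj]
  exact sum_subset (subset_univ _) fun i _ hi => hclosed i j hj (by simpa using hi)

theorem nonpos_of_le_mulVec (hM : Substoch M) (hE : Elsinger M) {x : Fin n → ℝ}
    (hx : x ≤ M *ᵥ x) : x ≤ 0 := by
  have hpos : x⁺ ≤ M *ᵥ x⁺ := by
    rw [posPart_def]
    exact sup_le (hx.trans (mulVec_mono_of_nonneg hM.1 le_sup_left))
      (mulVec_nonneg_of_nonneg hM.1 le_sup_right)
  exact posPart_eq_zero.1 (hM.eq_zero_of_le_mulVec hE (posPart_nonneg x) hpos)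

theorem isUnit_det_one_sub (hM : Substoch M) (hE : Elsinger M) : IsUnit (1 - M).det := by
  refine isUnit_iff_ne_zero.2 fun hdet => ?_
  obtain ⟨v, hv0, hv⟩ := exists_mulVec_eq_zero_iff.2 hdet
  have hfix : v = M *ᵥ v := by rwa [sub_mulVec, one_mulVec, sub_eq_zero] at hv
  have hneg : -v ≤ 0 := hM.nonpos_of_le_mulVec hE (by rw [mulVec_neg, ← hfix])
  exact hv0 (le_antisymm (hM.nonpos_of_le_mulVec hE hfix.le) (neg_nonpos.1 hneg))

theorem inv_one_sub_mulVec_nonneg (hM : Substoch M) (hE : Elsinger M) {b : Fin n → ℝ}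
    (hb : 0 ≤ b) : 0 ≤ (1 - M)⁻¹ *ᵥ b := by
  set z := (1 - M)⁻¹ *ᵥ b
  have hz : z = M *ᵥ z + b := inv_one_sub_mulVec_eq (hM.isUnit_det_one_sub hE) b
  have hneg : -z ≤ M *ᵥ -z := by
    rw [mulVec_neg, neg_le_neg_iff]
    exact (le_add_of_nonneg_right hb).trans_eq hz.symm
  exact neg_nonpos.1 (hM.nonpos_of_le_mulVec hE hneg)

end Substoch

section Phi

variable {n : ℕ} {a d : Fin n → ℝ} {Md Ms : Matrix (Fin n) (Fin n) ℝ}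

theorem Rmin_nonneg (ha : ∀ i, 0 ≤ a i) (hd : ∀ i, 0 ≤ d i) : 0 ≤ Rmin a d :=
  ⟨fun i => le_min (hd i) (ha i), fun _ => le_max_right _ _⟩

theorem Phi_mono (hMd : ∀ i j, 0 ≤ Md i j) (hMs : ∀ i j, 0 ≤ Ms i j) :
    Monotone (Phi a d Md Ms) := by
  rintro ⟨r, s⟩ ⟨r', s'⟩ ⟨hr, hs⟩
  have h : ∀ i, a i + (Md *ᵥ r) i + (Ms *ᵥ s) i ≤ a i + (Md *ᵥ r') i + (Ms *ᵥ s') i :=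
    fun i => add_le_add (add_le_add_right (mulVec_mono_of_nonneg hMd hr i) _)
      (mulVec_mono_of_nonneg hMs hs i)
  exact ⟨fun i => min_le_min_left _ (h i), fun i => max_le_max_right _ (sub_le_sub_right (h i) _)⟩

theorem Rmin_le_Phi (hMd : ∀ i j, 0 ≤ Md i j) (hMs : ∀ i j, 0 ≤ Ms i j)
    {R : (Fin n → ℝ) × (Fin n → ℝ)} (hR : 0 ≤ R) : Rmin a d ≤ Phi a d Md Ms R := by
  have h : ∀ i, a i ≤ a i + (Md *ᵥ R.1) i + (Ms *ᵥ R.2) i := fun i => by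
    have hr : 0 ≤ (Md *ᵥ R.1) i := mulVec_nonneg_of_nonneg hMd hR.1 i
    have hs : 0 ≤ (Ms *ᵥ R.2) i := mulVec_nonneg_of_nonneg hMs hR.2 i
    linarith
  exact ⟨fun i => min_le_min_left _ (h i), fun i => max_le_max_right _ (sub_le_sub_right (h i) _)⟩

theorem Phi_Rmax_le_Rmax (hMs : Substoch Ms) (hMsE : Elsinger Ms) :
    Phi a d Md Ms (Rmax a d Md Ms) ≤ Rmax a d Md Ms := by
  set b : Fin n → ℝ := fun i => max (a i + (Md *ᵥ d) i - d i) 0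
  have hb : 0 ≤ b := fun _ => le_max_right _ _
  have hz : (1 - Ms)⁻¹ *ᵥ b = Ms *ᵥ ((1 - Ms)⁻¹ *ᵥ b) + b :=
    inv_one_sub_mulVec_eq (hMs.isUnit_det_one_sub hMsE) b
  refine ⟨fun i => min_le_left _ _, fun i => max_le ?_ (hMs.inv_one_sub_mulVec_nonneg hMsE hb i)⟩
  have hbi : a i + (Md *ᵥ d) i - d i ≤ b i := le_max_left _ _
  have hzi := congrFun hz i
  simp only [Rmax, Pi.add_apply] at hzi ⊢
  linarith

end Phi

theorem Phi_maps_interval_general {n : ℕ} (a d : Fin n → ℝ)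
    (ha : ∀ i, 0 ≤ a i) (hd : ∀ i, 0 ≤ d i)
    (Md Ms : Matrix (Fin n) (Fin n) ℝ)
    (hMd : Substoch Md) (hMs : Substoch Ms)
    (hMsE : Elsinger Ms) :
    ∀ R : (Fin n → ℝ) × (Fin n → ℝ),
      Rmin a d ≤ R → R ≤ Rmax a d Md Ms →
      Rmin a d ≤ Phi a d Md Ms R ∧ Phi a d Md Ms R ≤ Rmax a d Md Ms :=
  fun _ hlo hhi =>
    ⟨Rmin_le_Phi hMd.1 hMs.1 ((Rmin_nonneg ha hd).trans hlo),
      (Phi_mono hMd.1 hMs.1 hhi).trans (Phi_Rmax_le_Rmax hMs hMsE)⟩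

/-- `Φ` maps the order interval `[R_min, R_max]` into itself. -/
theorem Phi_maps_interval {n : ℕ} (a d : Fin n → ℝ)
    (ha : ∀ i, 0 ≤ a i) (hd : ∀ i, 0 ≤ d i)
    (Md Ms : Matrix (Fin n) (Fin n) ℝ)
    (hMd : Substoch Md) (hMs : Substoch Ms)
    (hMdE : Elsinger Md) (hMsE : Elsinger Ms) :
    ∀ R : (Fin n → ℝ) × (Fin n → ℝ),
      Rmin a d ≤ R → R ≤ Rmax a d Md Ms →
      Rmin a d ≤ Phi a d Md Ms R ∧ Phi a d Md Ms R ≤ Rmax a d Md Ms :=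
  Phi_maps_interval_general a d ha hd Md Ms hMd hMs hMsE
end

section
/- For fixed debt payment vector r̄ ≥ 0, the iteration w^{k+1} = (I − M^s G(w^k))^{-1} w^0 with w^0 = a + M^d r̄ − d and G(w) = diag(w ≥ 0) produces a componentwise non-decreasing sequence of vectors. -/
open Matrix Finset Filter Topology

/-- `G(w) = diag(w ≥ 0)`: the 0-1 diagonal matrix indicating nonnegative entries. -/
noncomputable def Gmat {n : ℕ} (w : Fin n → ℝ) : Matrix (Fin n) (Fin n) ℝ :=
  Matrix.diagonal fun i => if 0 ≤ w i then 1 else 0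

/-!
For `B` substochastic with the Elsinger property, a minimum principle shows that every solution of
`x = x B + c` with `c ≥ 0` is nonnegative, so `I - B` is invertible with nonnegative inverse; all
`M^s G(v)` are such matrices. Since `G(v) u ≤ G(u) u = u⁺` for all `v, u`, if `x` solves
`(I - M^s G(u)) x = w⁰` then `(I - M^s G(u)) (x - u) = w⁰ - u + M^s u⁺ ≥ w⁰ - (I - M^s G(v)) u`.
So `u ≤ x` as soon as `(I - M^s G(v)) u ≤ w⁰` for some `v`: take `u = w^{k+1}`, `v = w^k`, and for
the first step `u = v = w⁰`.
-/

section

variable {n : ℕ}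

section Substoch

variable {B : Matrix (Fin n) (Fin n) ℝ}

theorem Substoch.nonneg_of_eq_vecMul_add (hB : Substoch B) (hE : Elsinger B) {x c : Fin n → ℝ}
    (hc : 0 ≤ c) (hx : x = x ᵥ* B + c) : 0 ≤ x := by
  by_contra hneg
  obtain ⟨i₀, hi₀⟩ : ∃ i, x i < 0 := by simpa [Pi.le_def] using hneg
  obtain ⟨k, -, hk⟩ := exists_min_image univ x ⟨i₀, mem_univ _⟩
  set m := x k
  have hm : m < 0 := (hk i₀ (mem_univ _)).trans_lt hi₀
  -- The set where `x` attains its minimum violates the Elsinger property.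
  refine hE (univ.filter fun j => x j = m) ⟨k, by simp [m]⟩ fun j hj => ?_
  have hxj : ∑ i, x i * B i j ≤ m := by
    have := congrFun hx j
    simp only [mem_filter, mem_univ, true_and] at hj
    simp only [vecMul, dotProduct, Pi.add_apply] at this
    linarith [show 0 ≤ c j from hc j]
  have hm_le : m ≤ m * ∑ i, B i j := by nlinarith [hB.2 j]
  have hexcess : ∑ i, (x i - m) * B i j = ∑ i, x i * B i j - m * ∑ i, B i j := by
    simp only [sub_mul, sum_sub_distrib, mul_sum]
  have hexcess_nonneg : ∀ i ∈ univ, 0 ≤ (x i - m) * B i j :=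
    fun i _ => mul_nonneg (sub_nonneg.2 (hk i (mem_univ _))) (hB.1 i j)
  have hexcess_zero : ∑ i, (x i - m) * B i j = 0 :=
    le_antisymm (by linarith) (sum_nonneg hexcess_nonneg)
  have hcol : ∑ i, B i j = 1 := by
    have : m * (∑ i, B i j - 1) = 0 := by linarith
    linarith [(mul_eq_zero.1 this).resolve_left hm.ne]
  have hoff : ∀ i, x i ≠ m → B i j = 0 := fun i hi =>
    (mul_eq_zero.1 ((sum_eq_zero_iff_of_nonneg hexcess_nonneg).1 hexcess_zero i
      (mem_univ _))).resolve_left (sub_ne_zero.2 hi)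
  rw [← hcol]
  exact sum_subset (subset_univ _) fun i _ hi => hoff i (by simpa using hi)

theorem Substoch.isUnit_det_one_sub_s10 (hB : Substoch B) (hE : Elsinger B) : IsUnit (1 - B).det := by
  rw [isUnit_iff_ne_zero]
  intro hdet
  obtain ⟨v, hv, hv0⟩ := exists_vecMul_eq_zero_iff.2 hdet
  have hfix : ∀ u : Fin n → ℝ, u ᵥ* (1 - B) = 0 → u = u ᵥ* B + 0 := by
    intro u hu
    rw [vecMul_sub, vecMul_one, sub_eq_zero] at hu
    rwa [add_zero]
  have hpos := hB.nonneg_of_eq_vecMul_add hE le_rfl (hfix v hv0)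
  have hneg := hB.nonneg_of_eq_vecMul_add hE le_rfl (hfix (-v) (by rw [neg_vecMul, hv0, neg_zero]))
  exact hv (le_antisymm (neg_nonneg.1 hneg) hpos)

theorem Substoch.inv_one_sub_nonneg (hB : Substoch B) (hE : Elsinger B) (i j : Fin n) :
    0 ≤ (1 - B)⁻¹ i j := by
  set y := Pi.single i 1 ᵥ* (1 - B)⁻¹ with hy
  have hrow : y ᵥ* (1 - B) = Pi.single i 1 := by
    rw [hy, vecMul_vecMul, nonsing_inv_mul _ (hB.isUnit_det_one_sub_s10 hE), vecMul_one]
  have hfix : y = y ᵥ* B + Pi.single i 1 := by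
    rw [← hrow, vecMul_sub, vecMul_one]
    abel
  have := hB.nonneg_of_eq_vecMul_add hE (Pi.single_nonneg.2 zero_le_one) hfix j
  rwa [hy, single_one_vecMul] at this

theorem Substoch.nonneg_of_one_sub_mulVec_nonneg (hB : Substoch B) (hE : Elsinger B)
    {δ : Fin n → ℝ} (h : 0 ≤ (1 - B) *ᵥ δ) : 0 ≤ δ := by
  have hδ : δ = (1 - B)⁻¹ *ᵥ ((1 - B) *ᵥ δ) := by
    rw [mulVec_mulVec, nonsing_inv_mul _ (hB.isUnit_det_one_sub_s10 hE), one_mulVec]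
  rw [hδ]
  exact fun i => dotProduct_nonneg_of_nonneg (fun j => hB.inv_one_sub_nonneg hE i j) h

end Substoch

theorem Gmat_mulVec_apply (v u : Fin n → ℝ) (j : Fin n) :
    (Gmat v *ᵥ u) j = if 0 ≤ v j then u j else 0 := by
  simp [Gmat, mulVec_diagonal]

theorem Gmat_mulVec_self_nonneg (u : Fin n → ℝ) : 0 ≤ Gmat u *ᵥ u := by
  intro j
  rw [Gmat_mulVec_apply]
  split_ifs with h
  exacts [h, le_rfl]

theorem Gmat_mulVec_le_Gmat_mulVec_self (v u : Fin n → ℝ) : Gmat v *ᵥ u ≤ Gmat u *ᵥ u := by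
  intro j
  simp only [Gmat_mulVec_apply]
  split_ifs <;> linarith

theorem Substoch.mul_Gmat {M : Matrix (Fin n) (Fin n) ℝ} (hM : Substoch M) (v : Fin n → ℝ) :
    Substoch (M * Gmat v) := by
  refine ⟨fun i j => ?_, fun j => ?_⟩ <;>
    simp only [Gmat, mul_diagonal, ← sum_mul] <;> split_ifs
  exacts [by simpa using hM.1 i j, by simp, by simpa using hM.2 j, by simp]

theorem Elsinger.mul_Gmat {M : Matrix (Fin n) (Fin n) ℝ} (hM : Elsinger M) (v : Fin n → ℝ) :
    Elsinger (M * Gmat v) := by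
  intro J hJ hcols
  refine hM J hJ fun j hj => ?_
  have := hcols j hj
  simp only [Gmat, mul_diagonal, ← sum_mul] at this
  split_ifs at this
  · simpa using this
  · simp at this

theorem le_of_one_sub_mul_Gmat_mulVec {M : Matrix (Fin n) (Fin n) ℝ} (hM : Substoch M)
    (hE : Elsinger M) {v u x b : Fin n → ℝ} (hu : (1 - M * Gmat v) *ᵥ u ≤ b)
    (hx : (1 - M * Gmat u) *ᵥ x = b) : u ≤ x := by
  have hexpand : ∀ y, (1 - M * Gmat y) *ᵥ u = u - M *ᵥ (Gmat y *ᵥ u) := fun y => by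
    rw [sub_mulVec, one_mulVec, mulVec_mulVec]
  have hGu : M *ᵥ (Gmat v *ᵥ u) ≤ M *ᵥ (Gmat u *ᵥ u) := fun i =>
    dotProduct_le_dotProduct_of_nonneg_left (Gmat_mulVec_le_Gmat_mulVec_self v u) (hM.1 i)
  have hincr : 0 ≤ (1 - M * Gmat u) *ᵥ (x - u) := by
    rw [mulVec_sub, hx, hexpand]
    calc 0 ≤ b - (1 - M * Gmat v) *ᵥ u := sub_nonneg.2 hu
      _ = b - (u - M *ᵥ (Gmat v *ᵥ u)) := by rw [hexpand]
      _ ≤ b - (u - M *ᵥ (Gmat u *ᵥ u)) := by gcongr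
  exact sub_nonneg.1 ((hM.mul_Gmat u).nonneg_of_one_sub_mulVec_nonneg (hE.mul_Gmat u) hincr)

end

theorem equity_iteration_monotone_general {n : ℕ}
    (Ms : Matrix (Fin n) (Fin n) ℝ)
    (hMs : Substoch Ms) (hMsE : Elsinger Ms)
    (w : ℕ → Fin n → ℝ)
    (hwk : ∀ k, w (k + 1) = (1 - Ms * Gmat (w k))⁻¹.mulVec (w 0)) :
    Monotone w := by
  have hstep : ∀ k, (1 - Ms * Gmat (w k)) *ᵥ w (k + 1) = w 0 := fun k => by
    rw [hwk k, mulVec_mulVec,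
      mul_nonsing_inv _ ((hMs.mul_Gmat _).isUnit_det_one_sub_s10 (hMsE.mul_Gmat _)), one_mulVec]
  have hstart : (1 - Ms * Gmat (w 0)) *ᵥ w 0 ≤ w 0 := by
    rw [sub_mulVec, one_mulVec, sub_le_self_iff, ← mulVec_mulVec]
    exact fun i => dotProduct_nonneg_of_nonneg (hMs.1 i) (Gmat_mulVec_self_nonneg _)
  refine monotone_nat_of_le_succ fun k => ?_
  cases k with
  | zero => exact le_of_one_sub_mul_Gmat_mulVec hMs hMsE hstart (hstep 0)
  | succ k => exact le_of_one_sub_mul_Gmat_mulVec hMs hMsE (hstep k).le (hstep (k + 1))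

/-- For fixed debt payments `r̄ ≥ 0`, the iteration
`w^{k+1} = (I − M^s G(w^k))⁻¹ w^0`, `w^0 = a + M^d r̄ − d`, is componentwise
non-decreasing. -/
theorem equity_iteration_monotone {n : ℕ} (a d rbar : Fin n → ℝ)
    (ha : ∀ i, 0 ≤ a i) (hd : ∀ i, 0 ≤ d i) (hrbar : ∀ i, 0 ≤ rbar i)
    (Md Ms : Matrix (Fin n) (Fin n) ℝ)
    (hMdnn : ∀ i j, 0 ≤ Md i j)
    (hMs : Substoch Ms) (hMsE : Elsinger Ms)
    (w : ℕ → Fin n → ℝ)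
    (hw0 : w 0 = fun i => a i + Md.mulVec rbar i - d i)
    (hwk : ∀ k, w (k + 1) = (1 - Ms * Gmat (w k))⁻¹.mulVec (w 0)) :
    Monotone w :=
  equity_iteration_monotone_general Ms hMs hMsE w hwk
end

section
/- Let L* be the diagonal 0-1 matrix of the default set D* = {i : a_i + (M^d r*)_i + (M^s s*)_i < d_i} of the unique fixed point (r*, s*) of Φ. Then x* := L* r* + (I − L*) s* solves the linear system A x = b with A = I − (M^d L* + M^s (I − L*)) and b = a + M^d (I − L*) d − (I − L*) d, and conversely r* = (I − L*) d + L* x*, s* = (I − L*) x*. -/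
open Matrix

/-!
Write `φ = a + M^d r* + M^s s*`. On the default set the fixed-point equations read `r* = φ`,
`s* = 0`, off it `r* = d`, `s* = φ - d`; that is, `r* = (I - L*) d + L* φ` and
`s* = (I - L*) (φ - d)`. Since `L*` is idempotent, `x* = φ - (I - L*) d`, from which the two
converse formulas follow, and substituting them into `φ = a + M^d r* + M^s s*` gives `A x* = b`.
-/

namespace Matrix

variable {ι R : Type*} [Fintype ι]

section Idempotent

variable [Ring R] {L : Matrix ι ι R}

theorem IsIdempotentElem.mulVec_mulVec_self (hL : IsIdempotentElem L) (v : ι → R) :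
    L *ᵥ (L *ᵥ v) = L *ᵥ v := by
  rw [mulVec_mulVec, hL.eq]

variable [DecidableEq ι]

theorem IsIdempotentElem.mulVec_one_sub_mulVec (hL : IsIdempotentElem L) (v : ι → R) :
    L *ᵥ ((1 - L) *ᵥ v) = 0 := by
  rw [mulVec_mulVec, hL.mul_one_sub_self, zero_mulVec]

theorem IsIdempotentElem.linear_system_of_split (hL : IsIdempotentElem L)
    {Md Ms : Matrix ι ι R} {a d r s : ι → R}
    (hr : r = (1 - L) *ᵥ d + L *ᵥ (a + Md *ᵥ r + Ms *ᵥ s))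
    (hs : s = (1 - L) *ᵥ (a + Md *ᵥ r + Ms *ᵥ s - d)) :
    let x := L *ᵥ r + (1 - L) *ᵥ s
    (1 - (Md * L + Ms * (1 - L))) *ᵥ x = a + Md *ᵥ ((1 - L) *ᵥ d) - (1 - L) *ᵥ d ∧
      r = (1 - L) *ᵥ d + L *ᵥ x ∧ s = (1 - L) *ᵥ x := by
  intro x
  set φ := a + Md *ᵥ r + Ms *ᵥ s
  have hL' := hL.one_sub
  have hLr : L *ᵥ r = L *ᵥ φ := by
    rw [hr, mulVec_add, hL.mulVec_one_sub_mulVec, hL.mulVec_mulVec_self, zero_add]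
  have hLs : (1 - L) *ᵥ s = s := by rw [hs, hL'.mulVec_mulVec_self]
  have hx : x = φ - (1 - L) *ᵥ d := by
    change L *ᵥ r + (1 - L) *ᵥ s = _
    rw [hLr, hLs, hs, mulVec_sub, sub_mulVec, sub_mulVec, one_mulVec, one_mulVec]
    abel
  have hLx : L *ᵥ x = L *ᵥ φ := by
    rw [hx, mulVec_sub, hL.mulVec_one_sub_mulVec, sub_zero]
  have hr' : r = (1 - L) *ᵥ d + L *ᵥ x := by rw [hLx]; exact hr
  have hs' : s = (1 - L) *ᵥ x := by
    rw [hx, mulVec_sub, hL'.mulVec_mulVec_self, ← mulVec_sub]; exact hs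
  refine ⟨?_, hr', hs'⟩
  have hLx' : L *ᵥ x = r - (1 - L) *ᵥ d := by rw [hr']; abel
  calc (1 - (Md * L + Ms * (1 - L))) *ᵥ x
      = x - Md *ᵥ (L *ᵥ x) - Ms *ᵥ ((1 - L) *ᵥ x) := by
        rw [sub_mulVec, add_mulVec, one_mulVec, ← mulVec_mulVec, ← mulVec_mulVec,
          sub_add_eq_sub_sub]
    _ = φ - (1 - L) *ᵥ d - Md *ᵥ (r - (1 - L) *ᵥ d) - Ms *ᵥ s := by rw [← hs', hLx', hx]
    _ = a + Md *ᵥ ((1 - L) *ᵥ d) - (1 - L) *ᵥ d := by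
        simp only [φ, mulVec_sub]
        abel

end Idempotent

variable [DecidableEq ι]

section Indicator

variable [Ring R] (p : ι → Prop) [DecidablePred p]

theorem isIdempotentElem_diagonal_ite :
    IsIdempotentElem (diagonal fun i => if p i then (1 : R) else 0) := by
  rw [IsIdempotentElem, diagonal_mul_diagonal]
  congr 1
  funext i
  split_ifs <;> simp

theorem diagonal_ite_mulVec_apply (v : ι → R) (i : ι) :
    ((diagonal fun i => if p i then (1 : R) else 0) *ᵥ v) i = if p i then v i else 0 := by
  rw [mulVec_diagonal, ite_mul, one_mul, zero_mul]

theorem one_sub_diagonal_ite_mulVec_apply (v : ι → R) (i : ι) :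
    ((1 - diagonal fun i => if p i then (1 : R) else 0) *ᵥ v) i = if p i then 0 else v i := by
  rw [sub_mulVec, one_mulVec, Pi.sub_apply, diagonal_ite_mulVec_apply]
  split_ifs <;> simp

end Indicator

section Order

variable [Ring R] [LinearOrder R] (φ d : ι → R)

theorem min_eq_diagonal_lt_mulVec :
    (fun i => min (d i) (φ i)) = (1 - diagonal fun i => if φ i < d i then (1 : R) else 0) *ᵥ d
      + (diagonal fun i => if φ i < d i then (1 : R) else 0) *ᵥ φ := by
  funext i
  rw [Pi.add_apply, one_sub_diagonal_ite_mulVec_apply, diagonal_ite_mulVec_apply]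
  split_ifs with h
  · simp [h.le]
  · simp [not_lt.mp h]

theorem max_sub_zero_eq_diagonal_lt_mulVec [AddLeftMono R] :
    (fun i => max (φ i - d i) 0) = (1 - diagonal fun i => if φ i < d i then (1 : R) else 0)
      *ᵥ (φ - d) := by
  funext i
  rw [one_sub_diagonal_ite_mulVec_apply, Pi.sub_apply]
  split_ifs with h
  · simp [h.le]
  · simp [not_lt.mp h]

end Order

end Matrix

theorem pseudo_solution_linear_system_general {n : ℕ} (a d : Fin n → ℝ)
    (Md Ms : Matrix (Fin n) (Fin n) ℝ)
    (rstar sstar : Fin n → ℝ)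
    (hfixr : rstar
      = fun i => min (d i) (a i + Md.mulVec rstar i + Ms.mulVec sstar i))
    (hfixs : sstar
      = fun i => max (a i + Md.mulVec rstar i + Ms.mulVec sstar i - d i) 0) :
    let Lstar : Matrix (Fin n) (Fin n) ℝ := Matrix.diagonal fun i =>
      if a i + Md.mulVec rstar i + Ms.mulVec sstar i < d i then 1 else 0
    let xstar : Fin n → ℝ := Lstar.mulVec rstar + (1 - Lstar).mulVec sstar
    (1 - (Md * Lstar + Ms * (1 - Lstar))).mulVec xstar
        = a + Md.mulVec ((1 - Lstar).mulVec d) - (1 - Lstar).mulVec d ∧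
    rstar = (1 - Lstar).mulVec d + Lstar.mulVec xstar ∧
    sstar = (1 - Lstar).mulVec xstar := by
  set φ := a + Md *ᵥ rstar + Ms *ᵥ sstar
  exact (isIdempotentElem_diagonal_ite _).linear_system_of_split
    (hfixr.trans (min_eq_diagonal_lt_mulVec φ d))
    (hfixs.trans (max_sub_zero_eq_diagonal_lt_mulVec φ d))

/-- With `L*` the 0-1 diagonal matrix of the default set of the
fixed point `(r*, s*)`, the vector `x* = L* r* + (I − L*) s*` solves
`A x = b` with `A = I − (M^d L* + M^s (I − L*))` and
`b = a + M^d (I − L*) d − (I − L*) d`, and conversely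
`r* = (I − L*) d + L* x*` and `s* = (I − L*) x*`. -/
theorem pseudo_solution_linear_system {n : ℕ} (a d : Fin n → ℝ)
    (ha : ∀ i, 0 ≤ a i) (hd : ∀ i, 0 ≤ d i)
    (Md Ms : Matrix (Fin n) (Fin n) ℝ)
    (hMdnn : ∀ i j, 0 ≤ Md i j) (hMsnn : ∀ i j, 0 ≤ Ms i j)
    (hMdnorm : ∀ j, ∑ i, Md i j < 1) (hMsnorm : ∀ j, ∑ i, Ms i j < 1)
    (rstar sstar : Fin n → ℝ)
    (hr : ∀ i, 0 ≤ rstar i) (hsn : ∀ i, 0 ≤ sstar i)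
    (hfixr : rstar
      = fun i => min (d i) (a i + Md.mulVec rstar i + Ms.mulVec sstar i))
    (hfixs : sstar
      = fun i => max (a i + Md.mulVec rstar i + Ms.mulVec sstar i - d i) 0) :
    let Lstar : Matrix (Fin n) (Fin n) ℝ := Matrix.diagonal fun i =>
      if a i + Md.mulVec rstar i + Ms.mulVec sstar i < d i then 1 else 0
    let xstar : Fin n → ℝ := Lstar.mulVec rstar + (1 - Lstar).mulVec sstar
    (1 - (Md * Lstar + Ms * (1 - Lstar))).mulVec xstar
        = a + Md.mulVec ((1 - Lstar).mulVec d) - (1 - Lstar).mulVec d ∧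
    rstar = (1 - Lstar).mulVec d + Lstar.mulVec xstar ∧
    sstar = (1 - Lstar).mulVec xstar :=
  pseudo_solution_linear_system_general a d Md Ms rstar sstar hfixr hfixs
end

section
/- The map Φ(r,s) = (min{d, a + M^d r + M^s s}, (a + M^d r + M^s s − d)^+) is non-expansive in the ℓ¹-norm: ||Φ(R₁) − Φ(R₂)||₁ ≤ c ||R₁ − R₂||₁ with c = max{||M^d||₁, ||M^s||₁} ≤ 1, where ||·||₁ is the ℓ¹-norm on ℝ^{2n}. In particular, if both operator norms are strictly less than 1, Φ is a strict contraction. -/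
/-!
Write `x = a + M^d r + M^s s`. The map `x ↦ (min d x, (x - d)⁺)` splits `x` into two parts that
are monotone in `x` and add up to `x`, so it is an ℓ¹-isometry onto its image, and
`‖Φ(R₁) - Φ(R₂)‖₁ = ‖x₁ - x₂‖₁`. A nonnegative matrix whose column sums are at most `c` has
ℓ¹-operator norm at most `c`, which bounds `‖x₁ - x₂‖₁` by `c ‖R₁ - R₂‖₁`.
-/

open Matrix Finset

theorem abs_min_sub_min_add_abs_max_sub_max (d x y : ℝ) :
    |min d x - min d y| + |max (x - d) 0 - max (y - d) 0| = |x - y| := by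
  wlog hyx : y ≤ x generalizing x y
  · rw [abs_sub_comm x, abs_sub_comm (min d x), abs_sub_comm (max (x - d) 0)]
    exact this y x (le_of_not_ge hyx)
  have hsplit : ∀ z, min d z + max (z - d) 0 = z := fun z => by
    rcases le_total z d with hz | hz
    · rw [min_eq_right hz, max_eq_right (by linarith)]; ring
    · rw [min_eq_left hz, max_eq_left (by linarith)]; ring
  rw [abs_of_nonneg (sub_nonneg.2 (min_le_min_left d hyx)),
    abs_of_nonneg (sub_nonneg.2 (max_le_max_right 0 (sub_le_sub_right hyx d))),
    abs_of_nonneg (sub_nonneg.2 hyx)]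
  linarith [hsplit x, hsplit y]

theorem sum_abs_mulVec_le {m n : Type*} [Fintype m] [Fintype n] {M : Matrix m n ℝ} {c : ℝ}
    (hM : ∀ i j, 0 ≤ M i j) (hc : ∀ j, ∑ i, M i j ≤ c) (v : n → ℝ) :
    ∑ i, |(M *ᵥ v) i| ≤ c * ∑ j, |v j| :=
  calc ∑ i, |(M *ᵥ v) i|
      ≤ ∑ i, ∑ j, M i j * |v j| := sum_le_sum fun i _ =>
        (abs_sum_le_sum_abs _ _).trans_eq (by simp only [abs_mul, abs_of_nonneg (hM i _)])
    _ = ∑ j, (∑ i, M i j) * |v j| := by rw [sum_comm]; simp_rw [sum_mul]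
    _ ≤ ∑ j, c * |v j| := sum_le_sum fun j _ => mul_le_mul_of_nonneg_right (hc j) (abs_nonneg _)
    _ = c * ∑ j, |v j| := (mul_sum _ _ _).symm

theorem Real.iSup_lt_of_finite {ι : Type*} [Finite ι] {f : ι → ℝ} {a : ℝ} (hf : ∀ i, f i < a)
    (ha : 0 < a) : ⨆ i, f i < a := by
  cases isEmpty_or_nonempty ι
  · rwa [Real.iSup_of_isEmpty]
  · obtain ⟨j, hj⟩ := Finite.exists_max f
    exact (ciSup_le hj).trans_lt (hf j)

theorem Phi_nonexpansive_l1_general {n : ℕ} (a d : Fin n → ℝ)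
    (Md Ms : Matrix (Fin n) (Fin n) ℝ)
    (hMdnn : ∀ i j, 0 ≤ Md i j) (hMsnn : ∀ i j, 0 ≤ Ms i j)
    (hMdsub : ∀ j, ∑ i, Md i j ≤ 1) (hMssub : ∀ j, ∑ i, Ms i j ≤ 1) :
    let c : ℝ := max (⨆ j, ∑ i, Md i j) (⨆ j, ∑ i, Ms i j)
    c ≤ 1 ∧
    (∀ r1 s1 r2 s2 : Fin n → ℝ,
      (∑ i, |min (d i) (a i + Md.mulVec r1 i + Ms.mulVec s1 i)
           - min (d i) (a i + Md.mulVec r2 i + Ms.mulVec s2 i)|)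
      + (∑ i, |max (a i + Md.mulVec r1 i + Ms.mulVec s1 i - d i) 0
             - max (a i + Md.mulVec r2 i + Ms.mulVec s2 i - d i) 0|)
      ≤ c * ((∑ i, |r1 i - r2 i|) + ∑ i, |s1 i - s2 i|)) ∧
    ((∀ j, ∑ i, Md i j < 1) → (∀ j, ∑ i, Ms i j < 1) → c < 1) := by
  intro c
  have hcol (M : Matrix (Fin n) (Fin n) ℝ) (j : Fin n) : ∑ i, M i j ≤ ⨆ j, ∑ i, M i j :=
    le_ciSup (Finite.bddAbove_range fun j => ∑ i, M i j) j
  refine ⟨max_le (Real.iSup_le hMdsub zero_le_one) (Real.iSup_le hMssub zero_le_one),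
    fun r1 s1 r2 s2 => ?_, fun hMd hMs =>
      max_lt (Real.iSup_lt_of_finite hMd one_pos) (Real.iSup_lt_of_finite hMs one_pos)⟩
  rw [← sum_add_distrib]
  simp only [abs_min_sub_min_add_abs_max_sub_max]
  calc ∑ i, |a i + (Md *ᵥ r1) i + (Ms *ᵥ s1) i - (a i + (Md *ᵥ r2) i + (Ms *ᵥ s2) i)|
      = ∑ i, |(Md *ᵥ (r1 - r2)) i + (Ms *ᵥ (s1 - s2)) i| := by
        simp only [mulVec_sub, Pi.sub_apply, add_sub_add_comm, sub_self, zero_add]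
    _ ≤ ∑ i, |(Md *ᵥ (r1 - r2)) i| + ∑ i, |(Ms *ᵥ (s1 - s2)) i| :=
        (sum_le_sum fun i _ => abs_add_le _ _).trans_eq sum_add_distrib
    _ ≤ c * ∑ i, |(r1 - r2) i| + c * ∑ i, |(s1 - s2) i| :=
        add_le_add (sum_abs_mulVec_le hMdnn (fun j => (hcol Md j).trans (le_max_left _ _)) _)
          (sum_abs_mulVec_le hMsnn (fun j => (hcol Ms j).trans (le_max_right _ _)) _)
    _ = c * ((∑ i, |r1 i - r2 i|) + ∑ i, |s1 i - s2 i|) := by simp only [Pi.sub_apply, mul_add]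

/-- `Φ` is non-expansive in the ℓ¹-norm with constant
`c = max{‖M^d‖₁, ‖M^s‖₁} ≤ 1` (maximum column sums); if both operator norms are
strictly less than 1, then `c < 1`, i.e. `Φ` is a strict contraction. -/
theorem Phi_nonexpansive_l1 {n : ℕ} (hn : 0 < n) (a d : Fin n → ℝ)
    (ha : ∀ i, 0 ≤ a i) (hd : ∀ i, 0 ≤ d i)
    (Md Ms : Matrix (Fin n) (Fin n) ℝ)
    (hMdnn : ∀ i j, 0 ≤ Md i j) (hMsnn : ∀ i j, 0 ≤ Ms i j)
    (hMdsub : ∀ j, ∑ i, Md i j ≤ 1) (hMssub : ∀ j, ∑ i, Ms i j ≤ 1) :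
    let c : ℝ := max (⨆ j, ∑ i, Md i j) (⨆ j, ∑ i, Ms i j)
    c ≤ 1 ∧
    (∀ r1 s1 r2 s2 : Fin n → ℝ,
      (∑ i, |min (d i) (a i + Md.mulVec r1 i + Ms.mulVec s1 i)
           - min (d i) (a i + Md.mulVec r2 i + Ms.mulVec s2 i)|)
      + (∑ i, |max (a i + Md.mulVec r1 i + Ms.mulVec s1 i - d i) 0
             - max (a i + Md.mulVec r2 i + Ms.mulVec s2 i - d i) 0|)
      ≤ c * ((∑ i, |r1 i - r2 i|) + ∑ i, |s1 i - s2 i|)) ∧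
    ((∀ j, ∑ i, Md i j < 1) → (∀ j, ∑ i, Ms i j < 1) → c < 1) :=
  Phi_nonexpansive_l1_general a d Md Ms hMdnn hMsnn hMdsub hMssub
end
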